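/- For p = 2 the identity h₀(−1/τ) + h₂(−1/τ) = ζ₈^{−1}·√τ·(h₀(τ) + h₂(τ)) follows from the two relations h₀(−1/τ) ± 2ζ₈ h₁(−1/τ) − h₂(−1/τ) = ±√τ(h₀(τ) ± 2ζ₈^{−1} h₁(τ) − h₂(τ)) together with the U₂-relation 2(f|U₂)|S T^{−4} S^{−1} = f(τ/2) − f((τ+1)/2), where f = ∑_β h_β(8τ)-type weight-1/2 form on Γ₀(8). -/

import Mathlib

open Complex

/-- The open upper half plane, as a subset of `ℂ`. -/
def UpperH : Set ℂ := {z : ℂ | 0 < z.im}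

/-- The principal square root `τ^{1/2}`. -/
noncomputable def csqrt (z : ℂ) : ℂ := z ^ ((1 : ℂ) / 2)

noncomputable def ζ₈ : ℂ := Complex.exp (2 * Real.pi * Complex.I / 8)

lemma isPrimitiveRoot_zeta8 : IsPrimitiveRoot ζ₈ 8 := by
  simpa [ζ₈] using Complex.isPrimitiveRoot_exp 8 (by norm_num)

lemma zeta8_ne_zero : ζ₈ ≠ 0 := Complex.exp_ne_zero _

lemma zeta8_pow_four : ζ₈ ^ 4 = -1 :=
  (isPrimitiveRoot_zeta8.pow_of_dvd (by norm_num) (by norm_num : 4 ∣ 8)).eq_neg_one_of_two_right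

lemma csqrt_ne_zero {z : ℂ} (hz : z ≠ 0) : csqrt z ≠ 0 := by
  simp [csqrt, Complex.cpow_eq_zero_iff, hz]

lemma csqrt_ofReal_mul {r : ℝ} (hr : 0 < r) (z : ℂ) : csqrt (r * z) = csqrt r * csqrt z := by
  rcases eq_or_ne z 0 with rfl | hz
  · simp [csqrt]
  have hr' : (r : ℂ) ≠ 0 := ofReal_ne_zero.mpr hr.ne'
  rw [csqrt, csqrt, csqrt, cpow_def_of_ne_zero (mul_ne_zero hr' hz), log_ofReal_mul hr hz,
    ofReal_log hr.le, add_mul, exp_add, ← cpow_def_of_ne_zero hr', ← cpow_def_of_ne_zero hz]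

lemma csqrt_four : csqrt 4 = 2 := by
  rw [csqrt, one_div, show (4 : ℂ) = 2 ^ 2 by norm_num]
  exact sq_cpow_two_inv (by norm_num)

lemma csqrt_four_mul (z : ℂ) : csqrt (4 * z) = 2 * csqrt z := by
  simpa [csqrt_four] using csqrt_ofReal_mul (r := 4) (by norm_num) z

lemma neg_four_div_four_mul (z : ℂ) : -4 / (4 * z) = -1 / z := by
  rw [show (-4 : ℂ) = 4 * -1 by norm_num, mul_div_mul_left _ _ (by norm_num)]

lemma ne_zero_of_mem_upperH {τ : ℂ} (hτ : τ ∈ UpperH) : τ ≠ 0 := by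
  rintro rfl
  exact lt_irrefl _ (show (0 : ℂ).im > 0 from hτ)

lemma add_one_mem_upperH {τ : ℂ} (hτ : τ ∈ UpperH) : τ + 1 ∈ UpperH := by
  simpa [UpperH] using hτ

lemma ofReal_mul_mem_upperH {r : ℝ} (hr : 0 < r) {τ : ℂ} (hτ : τ ∈ UpperH) :
    (r : ℂ) * τ ∈ UpperH := by
  simpa [UpperH] using mul_pos hr hτ

theorem h0_plus_h2_S_transformation_general
    (h₀ h₁ h₂ : ℂ → ℂ)
    (htrans₀ : ∀ τ ∈ UpperH, h₀ (τ + 1) = h₀ τ)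
    (htrans₂ : ∀ τ ∈ UpperH, h₂ (τ + 1) = ζ₈ ^ 4 * h₂ τ)
    (hGG : ∀ τ ∈ UpperH,
      h₀ (-1 / τ) + 2 * ζ₈ * h₁ (-1 / τ) - h₂ (-1 / τ) =
        csqrt τ * (h₀ τ + 2 * ζ₈⁻¹ * h₁ τ - h₂ τ))
    (hHH : ∀ τ ∈ UpperH,
      h₀ (-1 / τ) - 2 * ζ₈ * h₁ (-1 / τ) - h₂ (-1 / τ) =
        -(csqrt τ * (h₀ τ - 2 * ζ₈⁻¹ * h₁ τ - h₂ τ)))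
    (hU₂ : ∀ τ ∈ UpperH,
      (h₀ (-4 / τ) + h₂ (-4 / τ)) * (csqrt τ)⁻¹ =
        2 * h₁ (-4 / (τ + 4)) * (csqrt (τ + 4))⁻¹) :
    ∀ τ ∈ UpperH,
      h₀ (-1 / τ) + h₂ (-1 / τ) = ζ₈⁻¹ * csqrt τ * (h₀ τ + h₂ τ) := by
  intro τ hτ
  have hτ₁ : τ + 1 ∈ UpperH := add_one_mem_upperH hτ
  -- subtracting the two relations at `τ + 1` eliminates `h₁ (τ + 1)`
  have hh₁ : 2 * ζ₈ * h₁ (-1 / (τ + 1)) = csqrt (τ + 1) * (h₀ τ + h₂ τ) := by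
    have hG := hGG (τ + 1) hτ₁
    have hH := hHH (τ + 1) hτ₁
    rw [htrans₀ τ hτ, htrans₂ τ hτ, zeta8_pow_four] at hG hH
    linear_combination (hG - hH) / 2
  have hs : csqrt τ ≠ 0 := csqrt_ne_zero (ne_zero_of_mem_upperH hτ)
  have hs₁ : csqrt (τ + 1) ≠ 0 := csqrt_ne_zero (ne_zero_of_mem_upperH hτ₁)
  have hU : (h₀ (-1 / τ) + h₂ (-1 / τ)) * (2 * csqrt (τ + 1)) =
      2 * h₁ (-1 / (τ + 1)) * (2 * csqrt τ) := by
    have h := hU₂ (4 * τ) (by simpa using ofReal_mul_mem_upperH (r := 4) (by norm_num) hτ)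
    rwa [neg_four_div_four_mul, show 4 * τ + 4 = 4 * (τ + 1) by ring, neg_four_div_four_mul,
      csqrt_four_mul, csqrt_four_mul, ← div_eq_mul_inv, ← div_eq_mul_inv,
      div_eq_div_iff (mul_ne_zero two_ne_zero hs) (mul_ne_zero two_ne_zero hs₁)] at h
  have hζ : ζ₈ * ζ₈⁻¹ = 1 := mul_inv_cancel₀ zeta8_ne_zero
  apply mul_right_cancel₀ (mul_ne_zero zeta8_ne_zero hs₁)
  linear_combination ζ₈ / 2 * hU + csqrt τ * hh₁ - csqrt τ * csqrt (τ + 1) * (h₀ τ + h₂ τ) * hζ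

/-- **The `S`-transformation of `h₀ + h₂` for `p = 2`.**
Let `h₀, h₁, h₂` be the theta-components of a weight-`1/2` form `f ∈ M^!_{1/2}(2)`,
so that `h_β(τ+1) = ζ₈^{β²} h_β(τ)`.  Assume the two relations
`h₀(−1/τ) ± 2ζ₈ h₁(−1/τ) − h₂(−1/τ) = ±√τ (h₀(τ) ± 2ζ₈⁻¹ h₁(τ) − h₂(τ))`
and the `U₂`-relation
`2(f|U₂)|S T⁻⁴ S⁻¹ = f(τ/2) − f((τ+1)/2)`, written out as
`(h₀(−4/τ) + h₂(−4/τ))·τ^{−1/2} = 2·h₁(−4/(τ+4))·(τ+4)^{−1/2}`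
(its explicit form, with `f|U₂ = h₀(4τ) + h₂(4τ)` and the right-hand side equal to
`2 h₁(4τ)|_{S T⁴}`).  Then
`h₀(−1/τ) + h₂(−1/τ) = ζ₈⁻¹ √τ (h₀(τ) + h₂(τ))`. -/
theorem h0_plus_h2_S_transformation
    (h₀ h₁ h₂ : ℂ → ℂ)
    (htrans₀ : ∀ τ ∈ UpperH, h₀ (τ + 1) = h₀ τ)
    (htrans₁ : ∀ τ ∈ UpperH, h₁ (τ + 1) = ζ₈ * h₁ τ)
    (htrans₂ : ∀ τ ∈ UpperH, h₂ (τ + 1) = ζ₈ ^ 4 * h₂ τ)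
    (hGG : ∀ τ ∈ UpperH,
      h₀ (-1 / τ) + 2 * ζ₈ * h₁ (-1 / τ) - h₂ (-1 / τ) =
        csqrt τ * (h₀ τ + 2 * ζ₈⁻¹ * h₁ τ - h₂ τ))
    (hHH : ∀ τ ∈ UpperH,
      h₀ (-1 / τ) - 2 * ζ₈ * h₁ (-1 / τ) - h₂ (-1 / τ) =
        -(csqrt τ * (h₀ τ - 2 * ζ₈⁻¹ * h₁ τ - h₂ τ)))
    (hU₂ : ∀ τ ∈ UpperH,
      (h₀ (-4 / τ) + h₂ (-4 / τ)) * (csqrt τ)⁻¹ =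
        2 * h₁ (-4 / (τ + 4)) * (csqrt (τ + 4))⁻¹) :
    ∀ τ ∈ UpperH,
      h₀ (-1 / τ) + h₂ (-1 / τ) = ζ₈⁻¹ * csqrt τ * (h₀ τ + h₂ τ) :=
  h0_plus_h2_S_transformation_general h₀ h₁ h₂ htrans₀ htrans₂ hGG hHH hU₂
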